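/- For every comeager set X ⊆ [0,1] × [0,1] there exists a perfect set P ⊆ [0,1] such that P × P ⊆ X ∪ Δ, where Δ = {(x,x) : x ∈ [0,1]}. -/

import Mathlib

open Set unitInterval Metric

private lemma myc_exists_radius {V : Set I} (hV : IsOpen V) {q : I} (hq : q ∈ V) {ε d : ℝ}
    (hε : 0 < ε) (hd : 0 < d) :
    ∃ r : ℝ, 0 < r ∧ r ≤ ε ∧ r ≤ d ∧ closedBall q r ⊆ V := by
  obtain ⟨δ, hδ, hball⟩ := Metric.isOpen_iff.mp hV q hq
  refine ⟨min (δ/2) (min ε d), by positivity, ?_, ?_, ?_⟩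
  · exact (min_le_right _ _).trans (min_le_left _ _)
  · exact (min_le_right _ _).trans (min_le_right _ _)
  · exact (closedBall_subset_ball (lt_of_le_of_lt (min_le_left _ _) (by linarith))).trans hball

private lemma myc_exists_two_points {U U' : Set I} (hU' : IsOpen U')
    (hne : U.Nonempty) (hne' : U'.Nonempty) : ∃ a ∈ U, ∃ b ∈ U', a ≠ b := by
  obtain ⟨a, ha⟩ := hne
  have hd : Dense ({a}ᶜ : Set I) := dense_compl_singleton a
  obtain ⟨b, hbU, hba⟩ := hd.inter_open_nonempty U' hU' hne'
  exact ⟨a, ha, b, hbU, fun h => hba (h ▸ rfl)⟩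

private lemma myc_shrink_pairs {W : Set (I × I)} (hWo : IsOpen W) (hWd : Dense W) :
    ∀ (L : List (List Bool × List Bool)) (V : List Bool → Set I),
      (∀ l, IsOpen (V l)) → (∀ l, (V l).Nonempty) →
      ∃ V' : List Bool → Set I, (∀ l, IsOpen (V' l)) ∧ (∀ l, (V' l).Nonempty) ∧
        (∀ l, V' l ⊆ V l) ∧
        ∀ p ∈ L, p.1 ≠ p.2 → ∀ a ∈ V' p.1, ∀ b ∈ V' p.2, (a, b) ∈ W := by
  intro L
  induction L with
  | nil => exact fun V ho hne => ⟨V, ho, hne, fun _ => subset_rfl, by simp⟩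
  | cons p L ih =>
    intro V ho hne
    obtain ⟨V1, h1o, h1ne, h1sub, h1L⟩ := ih V ho hne
    by_cases hp : p.1 = p.2
    · refine ⟨V1, h1o, h1ne, h1sub, ?_⟩
      intro q hq hqne
      rcases List.mem_cons.mp hq with rfl | hq
      · exact absurd hp hqne
      · exact h1L q hq hqne
    · obtain ⟨z, hzV, hzW⟩ :=
        hWd.inter_open_nonempty ((V1 p.1) ×ˢ (V1 p.2)) ((h1o p.1).prod (h1o p.2))
          ((h1ne p.1).prod (h1ne p.2))
      obtain ⟨ε, hε, hball⟩ := Metric.isOpen_iff.mp hWo z hzW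
      classical
      have hsub2 : ∀ l, (if l = p.1 then V1 p.1 ∩ ball z.1 ε
          else if l = p.2 then V1 p.2 ∩ ball z.2 ε else V1 l) ⊆ V1 l := by
        intro l
        split_ifs with h1 h2
        · rw [h1]; exact inter_subset_left
        · rw [h2]; exact inter_subset_left
        · exact subset_rfl
      refine ⟨fun l => if l = p.1 then V1 p.1 ∩ ball z.1 ε
        else if l = p.2 then V1 p.2 ∩ ball z.2 ε else V1 l, ?_, ?_, ?_, ?_⟩
      · intro l; dsimp only
        split_ifs <;> first | exact (h1o _).inter isOpen_ball | exact h1o _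
      · intro l; dsimp only
        split_ifs with h1 h2
        · exact ⟨z.1, hzV.1, mem_ball_self hε⟩
        · exact ⟨z.2, hzV.2, mem_ball_self hε⟩
        · exact h1ne l
      · intro l; exact (hsub2 l).trans (h1sub l)
      · intro q hq hqne a ha b hb
        dsimp only at ha hb
        rcases List.mem_cons.mp hq with rfl | hq
        · rw [if_pos rfl] at ha
          rw [if_neg (Ne.symm hqne), if_pos rfl] at hb
          apply hball
          rw [← Prod.mk.eta (p := z), ← ball_prod_same]
          exact ⟨ha.2, hb.2⟩
        · exact h1L q hq hqne a (hsub2 q.1 ha) b (hsub2 q.2 hb)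

private lemma myc_step_exists {W : Set (I × I)} (hWo : IsOpen W) (hWd : Dense W) (n : ℕ) {ε : ℝ}
    (hε : 0 < ε) (V : List Bool → Set I) (ho : ∀ l, IsOpen (V l))
    (hne : ∀ l, (V l).Nonempty) :
    ∃ V' : List Bool → Set I,
      (∀ l, IsOpen (V' l)) ∧ (∀ l, (V' l).Nonempty) ∧
      (∀ l b, closure (V' (b :: l)) ⊆ V l) ∧
      (∀ l, EMetric.diam (V' l) ≤ ENNReal.ofReal ε) ∧
      (∀ l, Disjoint (closure (V' (false :: l))) (closure (V' (true :: l)))) ∧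
      (∀ l l', l.length = n + 1 → l'.length = n + 1 → l ≠ l' →
        ∀ a ∈ closure (V' l), ∀ b ∈ closure (V' l'), (a, b) ∈ W) := by
  classical
  set V0 : List Bool → Set I := fun l => V l.tail with hV0
  have h0o : ∀ l, IsOpen (V0 l) := fun l => ho _
  have h0ne : ∀ l, (V0 l).Nonempty := fun l => hne _
  set Ls : List (List Bool) :=
    (Finset.univ : Finset (Fin (n+1) → Bool)).toList.map List.ofFn with hLs
  have hmemLs : ∀ l : List Bool, l.length = n + 1 → l ∈ Ls := by
    intro l hl
    rw [hLs, List.mem_map]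
    refine ⟨fun i => l.get (Fin.cast hl.symm i), Finset.mem_toList.mpr (Finset.mem_univ _), ?_⟩
    apply List.ext_getElem (by simp [hl])
    intro i h1 h2
    simp only [List.getElem_ofFn]
    rfl
  obtain ⟨V1, h1o, h1ne, h1sub, h1W⟩ := myc_shrink_pairs hWo hWd (Ls.product Ls) V0 h0o h0ne
  have hdiamball : ∀ (x : I) (ρ : ℝ), ρ ≤ ε/2 →
      EMetric.diam (ball x ρ) ≤ ENNReal.ofReal ε := by
    intro x ρ hρ
    rw [← Metric.emetric_ball]
    refine le_trans EMetric.diam_ball ?_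
    calc 2 * ENNReal.ofReal ρ = ENNReal.ofReal ρ + ENNReal.ofReal ρ := two_mul _
      _ ≤ ENNReal.ofReal (ε/2) + ENNReal.ofReal (ε/2) :=
          add_le_add (ENNReal.ofReal_le_ofReal hρ) (ENNReal.ofReal_le_ofReal hρ)
      _ = ENNReal.ofReal ε := by
          rw [← ENNReal.ofReal_add (by positivity) (by positivity)]; norm_num
  have key : ∀ t : List Bool, ∃ (q : Bool → I) (r : Bool → ℝ),
      (∀ b, 0 < r b) ∧ (∀ b, r b ≤ ε/2) ∧ (∀ b, closedBall (q b) (r b) ⊆ V1 (b :: t)) ∧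
      Disjoint (closedBall (q false) (r false)) (closedBall (q true) (r true)) := by
    intro t
    obtain ⟨a, ha, b, hb, hab⟩ :=
      myc_exists_two_points (h1o (true :: t)) (h1ne (false :: t)) (h1ne (true :: t))
    have hd : (0:ℝ) < dist a b := dist_pos.mpr hab
    obtain ⟨r0, hr0, hr0ε, hr0d, hr0sub⟩ :=
      myc_exists_radius (h1o (false :: t)) ha (half_pos hε) (by positivity : (0:ℝ) < dist a b / 3)
    obtain ⟨r1, hr1, hr1ε, hr1d, hr1sub⟩ :=
      myc_exists_radius (h1o (true :: t)) hb (half_pos hε) (by positivity : (0:ℝ) < dist a b / 3)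
    refine ⟨fun x => cond x b a, fun x => cond x r1 r0, ?_, ?_, ?_, ?_⟩
    · intro x; cases x <;> assumption
    · intro x; cases x <;> assumption
    · intro x; cases x <;> assumption
    · exact closedBall_disjoint_closedBall (by simp only [cond]; linarith)
  choose q r hrpos hrε hrsub hrdisj using key
  obtain ⟨c, hc⟩ := h1ne []
  refine ⟨fun l => match l with
    | [] => V1 [] ∩ ball c (ε/2)
    | b :: t => ball (q t b) (r t b), ?_, ?_, ?_, ?_, ?_, ?_⟩
  · intro l; cases l with
    | nil => exact (h1o []).inter isOpen_ball
    | cons b t => exact isOpen_ball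
  · intro l; cases l with
    | nil => exact ⟨c, hc, mem_ball_self (half_pos hε)⟩
    | cons b t => exact ⟨q t b, mem_ball_self (hrpos t b)⟩
  · intro l b
    dsimp only
    refine (closure_ball_subset_closedBall.trans (hrsub l b)).trans ?_
    exact (h1sub (b :: l)).trans subset_rfl
  · intro l
    cases l with
    | nil =>
      dsimp only
      exact le_trans (EMetric.diam_mono inter_subset_right) (hdiamball c (ε/2) le_rfl)
    | cons b t =>
      dsimp only
      exact hdiamball _ _ (hrε t b)
  · intro l
    dsimp only
    exact Disjoint.mono closure_ball_subset_closedBall closure_ball_subset_closedBall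
      (hrdisj l)
  · intro l l' hl hl' hne' x hx y hy
    cases l with
    | nil => simp at hl
    | cons b t =>
      cases l' with
      | nil => simp at hl'
      | cons b' t' =>
        dsimp only at hx hy
        refine h1W (b :: t, b' :: t') ?_ hne'
          x (closure_ball_subset_closedBall.trans (hrsub t b) hx)
          y (closure_ball_subset_closedBall.trans (hrsub t' b') hy)
        exact List.pair_mem_product.mpr ⟨hmemLs _ hl, hmemLs _ hl'⟩

private noncomputable def mycStep (W : Set (I × I)) (hWo : IsOpen W) (hWd : Dense W) (n : ℕ)
    (p : {V : List Bool → Set I // (∀ l, IsOpen (V l)) ∧ (∀ l, (V l).Nonempty)}) :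
    {V : List Bool → Set I // (∀ l, IsOpen (V l)) ∧ (∀ l, (V l).Nonempty)} :=
  let h := myc_step_exists hWo hWd n (show (0:ℝ) < (1/2)^(n+1) by positivity) p.1 p.2.1 p.2.2
  ⟨h.choose, h.choose_spec.1, h.choose_spec.2.1⟩

private lemma mycStep_spec (W : Set (I × I)) (hWo : IsOpen W) (hWd : Dense W) (n : ℕ)
    (p : {V : List Bool → Set I // (∀ l, IsOpen (V l)) ∧ (∀ l, (V l).Nonempty)}) :
    (∀ l b, closure ((mycStep W hWo hWd n p).1 (b :: l)) ⊆ p.1 l) ∧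
    (∀ l, EMetric.diam ((mycStep W hWo hWd n p).1 l) ≤ ENNReal.ofReal ((1/2)^(n+1))) ∧
    (∀ l, Disjoint (closure ((mycStep W hWo hWd n p).1 (false :: l)))
      (closure ((mycStep W hWo hWd n p).1 (true :: l)))) ∧
    (∀ l l', l.length = n + 1 → l'.length = n + 1 → l ≠ l' →
      ∀ a ∈ closure ((mycStep W hWo hWd n p).1 l),
      ∀ b ∈ closure ((mycStep W hWo hWd n p).1 l'), (a, b) ∈ W) :=
  (myc_step_exists hWo hWd n (show (0:ℝ) < (1/2)^(n+1) by positivity)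
    p.1 p.2.1 p.2.2).choose_spec.2.2

private noncomputable def mycLevels (W : ℕ → Set (I × I)) (hWo : ∀ n, IsOpen (W n))
    (hWd : ∀ n, Dense (W n)) :
    ℕ → {V : List Bool → Set I // (∀ l, IsOpen (V l)) ∧ (∀ l, (V l).Nonempty)}
  | 0 => ⟨fun _ => univ, fun _ => isOpen_univ, fun _ => univ_nonempty⟩
  | (n + 1) => mycStep (W n) (hWo n) (hWd n) n (mycLevels W hWo hWd n)

/-- **Two-dimensional Mycielski theorem, category case.**
For every comeager set `X ⊆ [0,1] × [0,1]` there exists a perfect set `P ⊆ [0,1]`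
(nonempty, closed and without isolated points) such that `P × P ⊆ X ∪ Δ`. -/
theorem mycielski_category (X : Set (I × I)) (hX : X ∈ residual (I × I)) :
    ∃ P : Set I, P.Nonempty ∧ Perfect P ∧
      ∀ x ∈ P, ∀ y ∈ P, x ≠ y → (x, y) ∈ X := by
  -- Step 1: a sequence of dense open sets whose intersection is inside `X`.
  obtain ⟨S, hSo, hSd, hScnt, hSsub⟩ := mem_residual_iff.mp hX
  obtain ⟨g, hgo, hgd, hgsub⟩ : ∃ g : ℕ → Set (I × I),
      (∀ n, IsOpen (g n)) ∧ (∀ n, Dense (g n)) ∧ (⋂ n, g n) ⊆ X := by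
    rcases S.eq_empty_or_nonempty with rfl | hSne
    · exact ⟨fun _ => univ, fun _ => isOpen_univ, fun _ => dense_univ, by simpa using hSsub⟩
    · obtain ⟨g, rfl⟩ := hScnt.exists_eq_range hSne
      exact ⟨g, fun n => hSo _ (mem_range_self n), fun n => hSd _ (mem_range_self n),
        by rwa [sInter_range] at hSsub⟩
  -- Step 2: make them decreasing.
  set Wseq : ℕ → Set (I × I) := fun n => Nat.rec (g 0) (fun m Wm => Wm ∩ g (m+1)) n with hWseq
  have hWsucc : ∀ n, Wseq (n+1) = Wseq n ∩ g (n+1) := fun n => rfl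
  have hWo : ∀ n, IsOpen (Wseq n) := by
    intro n
    induction n with
    | zero => exact hgo 0
    | succ m ih => rw [hWsucc]; exact ih.inter (hgo (m+1))
  have hWd : ∀ n, Dense (Wseq n) := by
    intro n
    induction n with
    | zero => exact hgd 0
    | succ m ih => rw [hWsucc]; exact ih.inter_of_isOpen_left (hgd (m+1)) (hWo m)
  have hWanti : Antitone Wseq := antitone_nat_of_succ_le (fun n => by
    rw [hWsucc]; exact inter_subset_left)
  have hWsub : ∀ n, Wseq n ⊆ g n := by
    intro n
    cases n with
    | zero => exact subset_rfl
    | succ m => rw [hWsucc]; exact inter_subset_right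
  have hWX : (⋂ n, Wseq n) ⊆ X := fun z hz =>
    hgsub (mem_iInter.mpr fun n => hWsub n (mem_iInter.mp hz n))
  -- Step 3: the Cantor scheme.
  set G := mycLevels Wseq hWo hWd with hG
  have hGsucc : ∀ n, G (n+1) = mycStep (Wseq n) (hWo n) (hWd n) n (G n) := fun n => rfl
  set A : List Bool → Set I := fun l => (G l.length).1 l with hA
  have hlenA : ∀ (l : List Bool) (n : ℕ), l.length = n → A l = (G n).1 l := by
    intro l n h
    rw [hA]; dsimp only; rw [h]
  have hAne : ∀ l, (A l).Nonempty := fun l => (G l.length).2.2 l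
  have hAca : CantorScheme.ClosureAntitone A := by
    intro l b
    have h := (mycStep_spec (Wseq l.length) (hWo _) (hWd _) l.length (G l.length)).1 l b
    exact h
  have hAdisj : CantorScheme.Disjoint A := by
    intro l a b hab
    have h := (mycStep_spec (Wseq l.length) (hWo _) (hWd _) l.length (G l.length)).2.2.1 l
    have hd : Disjoint (A (false :: l)) (A (true :: l)) :=
      Disjoint.mono subset_closure subset_closure h
    cases a <;> cases b
    · exact absurd rfl hab
    · exact hd
    · exact hd.symm
    · exact absurd rfl hab
  have hAvd : CantorScheme.VanishingDiam A := by
    intro x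
    have hb : ∀ n : ℕ, EMetric.diam (A (PiNat.res x (n+1))) ≤ ENNReal.ofReal ((1/2)^(n+1)) := by
      intro n
      have h := (mycStep_spec (Wseq n) (hWo n) (hWd n) n (G n)).2.1 (PiNat.res x (n+1))
      rw [← hGsucc n] at h
      rwa [← hlenA _ (n+1) (PiNat.res_length _ _)] at h
    have h0 : Filter.Tendsto (fun n : ℕ => ENNReal.ofReal ((1/2:ℝ)^n)) Filter.atTop (nhds 0) := by
      rw [← ENNReal.ofReal_zero]
      exact ENNReal.tendsto_ofReal
        (tendsto_pow_atTop_nhds_zero_of_lt_one (by norm_num) (by norm_num))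
    refine tendsto_of_tendsto_of_tendsto_of_le_of_le' tendsto_const_nhds h0 ?_ ?_
    · exact Filter.Eventually.of_forall (fun n => zero_le)
    · filter_upwards [Filter.eventually_ge_atTop 1] with n hn
      cases n with
      | zero => omega
      | succ m => exact hb m
  have hdom := CantorScheme.ClosureAntitone.map_of_vanishingDiam hAvd hAca hAne
  set f : (ℕ → Bool) → I :=
    fun x => (CantorScheme.inducedMap A).2 ⟨x, by rw [hdom]; trivial⟩ with hf
  have hfc : Continuous f :=
    (CantorScheme.VanishingDiam.map_continuous hAvd).comp
      (Continuous.subtype_mk continuous_id _)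
  have hfinj : Function.Injective f := by
    intro x y hxy
    have h := CantorScheme.Disjoint.map_injective hAdisj hxy
    exact congrArg Subtype.val h
  have hfmem : ∀ (x : ℕ → Bool) (n : ℕ), f x ∈ A (PiNat.res x n) := fun x n =>
    CantorScheme.map_mem _ n
  have hcross : ∀ x y : (ℕ → Bool), x ≠ y → (f x, f y) ∈ X := by
    intro x y hxy
    obtain ⟨m, hm⟩ := Function.ne_iff.mp hxy
    apply hWX
    rw [mem_iInter]
    intro k
    refine hWanti (le_max_left k m) ?_
    set n := max k m with hn
    have hnm : m < n + 1 := lt_of_le_of_lt (le_max_right k m) (Nat.lt_succ_self n)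
    have hres : PiNat.res x (n+1) ≠ PiNat.res y (n+1) := fun h =>
      hm (PiNat.res_eq_res.mp h hnm)
    have h := (mycStep_spec (Wseq n) (hWo n) (hWd n) n (G n)).2.2.2
      (PiNat.res x (n+1)) (PiNat.res y (n+1)) (PiNat.res_length _ _) (PiNat.res_length _ _) hres
    rw [← hGsucc n] at h
    refine h _ (subset_closure ?_) _ (subset_closure ?_)
    · have := hfmem x (n+1); rwa [hlenA _ (n+1) (PiNat.res_length _ _)] at this
    · have := hfmem y (n+1); rwa [hlenA _ (n+1) (PiNat.res_length _ _)] at this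
  -- Step 4: conclusion.
  refine ⟨Set.range f, ⟨f (fun _ => false), mem_range_self _⟩, ⟨?_, ?_⟩, ?_⟩
  · exact (isCompact_range hfc).isClosed
  · intro p hp
    obtain ⟨x, rfl⟩ := hp
    rw [accPt_iff_nhds]
    intro U hU
    have hxs : Filter.Tendsto (fun n => Function.update x n (!x n)) Filter.atTop (nhds x) := by
      rw [tendsto_pi_nhds]
      intro i
      refine Filter.Tendsto.congr' ?_ (tendsto_const_nhds (x := x i))
      filter_upwards [Filter.eventually_gt_atTop i] with n hn
      exact (Function.update_of_ne (by omega) _ _).symm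
    have hev : Filter.Tendsto (fun n => f (Function.update x n (!x n)))
        Filter.atTop (nhds (f x)) := (hfc.tendsto x).comp hxs
    obtain ⟨n, hn⟩ := (hev.eventually_mem hU).exists
    refine ⟨f (Function.update x n (!x n)), ⟨hn, mem_range_self _⟩, ?_⟩
    intro heq
    have h := congrFun (hfinj heq) n
    rw [Function.update_self] at h
    simp at h
  · intro p hp q hq hpq
    obtain ⟨x, rfl⟩ := hp
    obtain ⟨y, rfl⟩ := hq
    exact hcross x y (fun h => hpq (congrArg f h))
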